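/- arXiv:2212.11390 — 5 statements merged into one kernel-verified Lean document; each statement's English description precedes it below -/
import Mathlib

section
/- For all complex numbers ξ and η with η ≠ 0 and ξ/η not a negative real number, if ϑ = |Arg(ξ/η)|, then |ξ − η| ≥ (|ξ| + |η|)·sin(ϑ/2). -/
/-!
Writing `ξ/η = r e^{iθ}`, the law of cosines in half-angle form reads
`|ξ/η - 1|² = (r + 1)² sin²(θ/2) + (r - 1)² cos²(θ/2) ≥ ((r + 1) sin(|θ|/2))²`;
multiplying by `|η|` gives the inequality.
-/

open Real

theorem Complex.norm_sub_one_sq_eq_half_angle (z : ℂ) :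
    ‖z - 1‖ ^ 2 =
      ((‖z‖ + 1) * Real.sin (z.arg / 2)) ^ 2 + ((‖z‖ - 1) * Real.cos (z.arg / 2)) ^ 2 := by
  have hcos : Real.cos z.arg = 2 * Real.cos (z.arg / 2) ^ 2 - 1 := by
    rw [← Real.cos_two_mul, mul_div_cancel₀ _ two_ne_zero]
  have hsub : ‖z - 1‖ ^ 2 = ‖z‖ ^ 2 - 2 * z.re + 1 := by
    rw [← normSq_eq_norm_sq, ← normSq_eq_norm_sq, normSq_apply, normSq_apply]
    simp only [sub_re, sub_im, one_re, one_im]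
    ring
  rw [hsub, ← norm_mul_cos_arg, hcos]
  linear_combination -(‖z‖ + 1) ^ 2 * Real.sin_sq_add_cos_sq (z.arg / 2)

theorem Complex.mul_sin_abs_arg_half_le_norm_sub_one (z : ℂ) :
    (‖z‖ + 1) * Real.sin (|z.arg| / 2) ≤ ‖z - 1‖ := by
  have hsin : Real.sin (|z.arg| / 2) ≤ |Real.sin (z.arg / 2)| := by
    rcases abs_choice z.arg with h | h <;> rw [h]
    · exact le_abs_self _
    · rw [neg_div, Real.sin_neg]
      exact neg_le_abs _
  have hsq : ((‖z‖ + 1) * Real.sin (z.arg / 2)) ^ 2 ≤ ‖z - 1‖ ^ 2 := by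
    rw [norm_sub_one_sq_eq_half_angle]
    exact le_add_of_nonneg_right (sq_nonneg _)
  calc (‖z‖ + 1) * Real.sin (|z.arg| / 2)
      ≤ (‖z‖ + 1) * |Real.sin (z.arg / 2)| := by gcongr
    _ = |(‖z‖ + 1) * Real.sin (z.arg / 2)| := by
      rw [abs_mul, abs_of_pos (a := ‖z‖ + 1) (by positivity)]
    _ ≤ ‖z - 1‖ := abs_le_of_sq_le_sq hsq (norm_nonneg _)

theorem stmt_0_general (ξ η : ℂ) :
    (‖ξ‖ + ‖η‖) * Real.sin (|Complex.arg (ξ / η)| / 2)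
      ≤ ‖ξ - η‖ := by
  rcases eq_or_ne η 0 with rfl | hη
  · simp
  calc (‖ξ‖ + ‖η‖) * sin (|(ξ / η).arg| / 2)
      = (‖ξ / η‖ + 1) * sin (|(ξ / η).arg| / 2) * ‖η‖ := by
        rw [norm_div]
        field_simp
    _ ≤ ‖ξ / η - 1‖ * ‖η‖ := by
        gcongr
        exact (ξ / η).mul_sin_abs_arg_half_le_norm_sub_one
    _ = ‖ξ - η‖ := by rw [← norm_mul, sub_one_mul, div_mul_cancel₀ _ hη]

/-- If `ξ/η` is not a negative real number and `ϑ = |Arg(ξ/η)|`, then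
`|ξ − η| ≥ (|ξ| + |η|)·sin(ϑ/2)`. -/
theorem stmt_0 (ξ η : ℂ) (hη : η ≠ 0) (hneg : ∀ r : ℝ, r < 0 → ξ / η ≠ (r : ℂ)) :
    (‖ξ‖ + ‖η‖) * Real.sin (|Complex.arg (ξ / η)| / 2)
      ≤ ‖ξ - η‖ :=
  stmt_0_general ξ η
end

section
/- If f is a non-zero Rogers function, then |f(ξ)| is a non-decreasing function of ξ ∈ (0, ∞); that is, for 0 < ξ₁ ≤ ξ₂ one has |f(ξ₁)| ≤ |f(ξ₂)|. -/
/-- A Rogers function: holomorphic on the right half-plane `{Re ξ > 0}` with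
`Re(f(ξ)/ξ) ≥ 0` there. -/
def IsRogers (f : ℂ → ℂ) : Prop :=
  DifferentiableOn ℂ f {ξ : ℂ | 0 < ξ.re} ∧ ∀ ξ : ℂ, 0 < ξ.re → 0 ≤ (f ξ / ξ).re

/-!
Write `f ξ = ξ * F ξ`, where `F = f / ξ` is holomorphic with `Re F ≥ 0` on the right half-plane.
The Schwarz–Pick lemma for the half-plane gives `x * ‖F' x‖ ≤ Re (F x) ≤ ‖F x‖` for `x > 0`, so
`d/dx ‖f x‖² = 2 x ⟪F x, F x + x F' x⟫ ≥ 2 x ‖F x‖ (‖F x‖ - x ‖F' x‖) ≥ 0`.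
-/

open Complex ComplexConjugate Metric Set Filter Topology

lemma re_pos_mem_nhds {ξ : ℂ} (hξ : 0 < ξ.re) : {w : ℂ | 0 < w.re} ∈ 𝓝 ξ :=
  (isOpen_lt continuous_const continuous_re).mem_nhds hξ

lemma add_conj_ne_zero_of_re_pos {a w : ℂ} (ha : 0 < a.re) (hw : 0 < w.re) : w + conj a ≠ 0 :=
  ne_zero_of_re_pos (by simp only [add_re, conj_re]; linarith)

lemma re_add_conj_mul_div_one_sub_pos {ξ z : ℂ} (hξ : 0 < ξ.re) (hz : ‖z‖ < 1) :
    0 < ((ξ + conj ξ * z) / (1 - z)).re := by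
  have hz1 : 1 - z ≠ 0 := fun h => by simp [← sub_eq_zero.1 h] at hz
  have hnormSq : normSq z < 1 := by rwa [← Complex.sq_norm, sq_lt_one_iff₀ (norm_nonneg z)]
  have hre : ((ξ + conj ξ * z) / (1 - z)).re = ξ.re * (1 - normSq z) / normSq (1 - z) := by
    simp only [div_re, normSq_apply, add_re, add_im, mul_re, mul_im, conj_re, conj_im, sub_re,
      sub_im, one_re, one_im]
    ring
  rw [hre]
  exact div_pos (mul_pos hξ (by linarith)) (normSq_pos.2 hz1)

lemma norm_sub_div_add_conj_lt_one {a w : ℂ} (ha : 0 < a.re) (hw : 0 < w.re) :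
    ‖(w - a) / (w + conj a)‖ < 1 := by
  rw [norm_div, div_lt_one (norm_pos_iff.2 (add_conj_ne_zero_of_re_pos ha hw)),
    ← sq_lt_sq₀ (norm_nonneg _) (norm_nonneg _), Complex.sq_norm, Complex.sq_norm]
  simp only [normSq_apply, sub_re, sub_im, add_re, add_im, conj_re, conj_im]
  nlinarith

lemma hasDerivAt_add_conj_mul_div_one_sub (ξ : ℂ) :
    HasDerivAt (fun z => (ξ + conj ξ * z) / (1 - z)) (2 * ξ.re) 0 := by
  refine ((((hasDerivAt_id (0 : ℂ)).const_mul (conj ξ)).const_add ξ).fun_div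
    ((hasDerivAt_id (0 : ℂ)).const_sub 1) (by norm_num)).congr_deriv ?_
  simp only [id, mul_zero, add_zero, sub_zero, mul_one, one_pow, div_one, mul_neg, sub_neg_eq_add]
  rw [add_comm, add_conj]
  push_cast
  ring

lemma hasDerivAt_sub_div_add_conj {a : ℂ} (ha : 0 < a.re) :
    HasDerivAt (fun w => (w - a) / (w + conj a)) (1 / (2 * a.re)) a := by
  have hden := add_conj_ne_zero_of_re_pos ha ha
  refine (((hasDerivAt_id a).sub_const a).fun_div ((hasDerivAt_id a).add_const (conj a))
    hden).congr_deriv ?_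
  rw [← ofReal_ofNat, ← ofReal_mul, ← add_conj]
  simp only [id, one_mul, mul_one, sub_self, sub_zero]
  rw [sq, div_mul_eq_div_div, div_self hden]

/-- Conjugate `F` by the Cayley maps `z ↦ (ξ + ξ̄ z) / (1 - z)` (unit disc onto the half-plane,
`0 ↦ ξ`) and `w ↦ (w - a) / (w + ā)` (half-plane into the unit disc, `a = F ξ ↦ 0`), and apply
the Schwarz lemma at `0`. -/
theorem norm_deriv_le_re_div_re_of_re_pos {F : ℂ → ℂ} (hF : DifferentiableOn ℂ F {w | 0 < w.re})
    (hpos : ∀ w : ℂ, 0 < w.re → 0 < (F w).re) {ξ : ℂ} (hξ : 0 < ξ.re) :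
    ‖deriv F ξ‖ ≤ (F ξ).re / ξ.re := by
  set a := F ξ with ha_def
  have ha : 0 < a.re := hpos ξ hξ
  set φ : ℂ → ℂ := fun z => (ξ + conj ξ * z) / (1 - z)
  set ψ : ℂ → ℂ := fun w => (w - a) / (w + conj a)
  have hφ0 : φ 0 = ξ := by simp [φ]
  have hφ : MapsTo φ (ball 0 1) {w | 0 < w.re} := fun z hz =>
    re_add_conj_mul_div_one_sub_pos hξ (mem_ball_zero_iff.1 hz)
  have hφd : DifferentiableOn ℂ φ (ball 0 1) := by
    refine ((differentiableOn_id.const_mul _).const_add _).div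
      ((differentiableOn_const _).sub differentiableOn_id) fun z hz h => ?_
    simp [← sub_eq_zero.1 h] at hz
  have hψd : DifferentiableOn ℂ ψ {w | 0 < w.re} :=
    (differentiableOn_id.sub_const _).div (differentiableOn_id.add_const _) fun w hw =>
      add_conj_ne_zero_of_re_pos ha hw
  have hmaps : MapsTo (ψ ∘ F ∘ φ) (ball 0 1) (closedBall ((ψ ∘ F ∘ φ) 0) 1) := by
    intro z hz
    simp only [Function.comp_apply, hφ0, ψ, ← ha_def, sub_self, zero_div, mem_closedBall_zero_iff]
    exact (norm_sub_div_add_conj_lt_one ha (hpos _ (hφ hz))).le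
  have hG : HasDerivAt (ψ ∘ F ∘ φ) (1 / (2 * a.re) * (deriv F ξ * (2 * ξ.re))) 0 := by
    have hFd : HasDerivAt F (deriv F ξ) (φ 0) :=
      hφ0 ▸ (hF.differentiableAt (re_pos_mem_nhds hξ)).hasDerivAt
    have hψd : HasDerivAt ψ (1 / (2 * a.re)) (F (φ 0)) := hφ0 ▸ hasDerivAt_sub_div_add_conj ha
    exact hψd.comp 0 (hFd.comp 0 (hasDerivAt_add_conj_mul_div_one_sub ξ))
  have hschwarz := norm_deriv_le_div_of_mapsTo_ball
    (hψd.comp (hF.comp hφd hφ) fun z hz => hpos _ (hφ hz)) hmaps one_pos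
  rw [hG.deriv, div_one, norm_mul, norm_mul, norm_div, norm_one, norm_mul, norm_mul,
    Complex.norm_ofNat, norm_real, norm_real, Real.norm_of_nonneg ha.le,
    Real.norm_of_nonneg hξ.le] at hschwarz
  rw [le_div_iff₀ hξ]
  field_simp at hschwarz
  linarith

theorem norm_deriv_le_re_div_re {F : ℂ → ℂ} (hF : DifferentiableOn ℂ F {w | 0 < w.re})
    (hnonneg : ∀ w : ℂ, 0 < w.re → 0 ≤ (F w).re) {ξ : ℂ} (hξ : 0 < ξ.re) :
    ‖deriv F ξ‖ ≤ (F ξ).re / ξ.re := by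
  refine le_of_forall_pos_le_add fun ε hε => ?_
  have h := norm_deriv_le_re_div_re_of_re_pos (F := fun w => F w + ((ε * ξ.re : ℝ) : ℂ))
    (hF.add_const _) (fun w hw => by simp only [add_re, ofReal_re]; nlinarith [hnonneg w hw]) hξ
  rwa [deriv_add_const, add_re, ofReal_re, add_div, mul_div_cancel_right₀ _ hξ.ne'] at h

lemma real_inner_add_nonneg_of_norm_le {E : Type*} [NormedAddCommGroup E] [InnerProductSpace ℝ E]
    {a b : E} (h : ‖b‖ ≤ ‖a‖) : 0 ≤ inner ℝ a (a + b) := by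
  rw [inner_add_right, real_inner_self_eq_norm_sq]
  nlinarith [neg_le_of_abs_le (abs_real_inner_le_norm a b), norm_nonneg a]

namespace IsRogers

variable {f : ℂ → ℂ}

theorem real_inner_deriv_nonneg (hf : IsRogers f) {x : ℝ} (hx : 0 < x) :
    0 ≤ inner ℝ (f x) (deriv f x) := by
  set F : ℂ → ℂ := fun ξ => f ξ / ξ
  have hx' : 0 < (x : ℂ).re := by simpa using hx
  have hF : DifferentiableOn ℂ F {ξ | 0 < ξ.re} :=
    hf.1.div differentiableOn_id fun _ => ne_zero_of_re_pos
  have hfF : ∀ ξ : ℂ, ξ ≠ 0 → f ξ = ξ * F ξ := fun ξ hξ => (mul_div_cancel₀ _ hξ).symm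
  have hfx : f x = x • F x := hfF x (ne_zero_of_re_pos hx')
  have hf'x : deriv f x = F x + x • deriv F x := by
    have hprod := (hasDerivAt_id (x : ℂ)).mul (hF.differentiableAt (re_pos_mem_nhds hx')).hasDerivAt
    have heq : f =ᶠ[𝓝 (x : ℂ)] fun ξ => id ξ * F ξ :=
      eventuallyEq_of_mem (re_pos_mem_nhds hx') fun ξ hξ => hfF ξ (ne_zero_of_re_pos hξ)
    rw [(hprod.congr_of_eventuallyEq heq).deriv]
    simp [real_smul]
  have hbound : ‖x • deriv F x‖ ≤ ‖F x‖ := calc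
    ‖x • deriv F x‖ = x * ‖deriv F x‖ := by rw [norm_smul, Real.norm_of_nonneg hx.le]
    _ ≤ (F x).re := by
      have h := norm_deriv_le_re_div_re hF hf.2 hx'
      rw [ofReal_re, le_div_iff₀ hx] at h
      linarith
    _ ≤ ‖F x‖ := re_le_norm _
  rw [hfx, hf'x, real_inner_smul_left]
  exact mul_nonneg hx.le (real_inner_add_nonneg_of_norm_le hbound)

theorem monotoneOn_norm (hf : IsRogers f) : MonotoneOn (fun x : ℝ => ‖f x‖) (Ioi 0) := by
  have hderiv : ∀ x ∈ Ioi (0 : ℝ),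
      HasDerivAt (fun y : ℝ => ‖f y‖ ^ 2) (2 * inner ℝ (f x) (deriv f x)) x := fun x hx =>
    (hf.1.differentiableAt (re_pos_mem_nhds (by simpa using hx))).hasDerivAt.comp_ofReal.norm_sq
  have hsq : MonotoneOn (fun y : ℝ => ‖f y‖ ^ 2) (Ioi 0) := by
    refine monotoneOn_of_hasDerivWithinAt_nonneg (f' := fun x => 2 * inner ℝ (f x) (deriv f x))
      (convex_Ioi 0) (fun x hx => (hderiv x hx).continuousAt.continuousWithinAt)
      (fun x hx => ?_) fun x hx => ?_
    all_goals rw [interior_Ioi] at hx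
    · exact (hderiv x hx).hasDerivWithinAt
    · exact mul_nonneg zero_le_two (hf.real_inner_deriv_nonneg hx)
  exact fun x hx y hy hxy =>
    (pow_le_pow_iff_left₀ (norm_nonneg _) (norm_nonneg _) two_ne_zero).1 (hsq hx hy hxy)

end IsRogers

theorem stmt_7_general (f : ℂ → ℂ) (hf : IsRogers f)
    (x₁ x₂ : ℝ) (h₁ : 0 < x₁) (h₁₂ : x₁ ≤ x₂) :
    ‖f x₁‖ ≤ ‖f x₂‖ :=
  hf.monotoneOn_norm h₁ (h₁.trans_le h₁₂) h₁₂

/-- If `f` is a non-zero Rogers function, then `|f|` is non-decreasing on `(0, ∞)`. -/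
theorem stmt_7 (f : ℂ → ℂ) (hf : IsRogers f)
    (hnz : ∃ ξ : ℂ, 0 < ξ.re ∧ f ξ ≠ 0)
    (x₁ x₂ : ℝ) (h₁ : 0 < x₁) (h₁₂ : x₁ ≤ x₂) :
    ‖f x₁‖ ≤ ‖f x₂‖ :=
  stmt_7_general f hf x₁ x₂ h₁ h₁₂
end

section
/- Let f be a Rogers function and r > 0. Then for every ξ with Re ξ > 0: (1/√2)·(|ξ|²/(r²+|ξ|²))·(Re ξ/|ξ|)·|f(r)| ≤ |f(ξ)| ≤ √2·((r²+|ξ|²)/r²)·(|ξ|/Re ξ)·|f(r)|. -/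
/-!
For a Rogers function `f`, the function `g ξ = f ξ / ξ` maps the right half-plane into its
closure. Conjugating `g + ε` by Cayley transforms gives a self-map of the unit disc fixing `0`,
so the Schwarz lemma yields the Schwarz–Pick inequality
`|g ξ - g r| |ξ + r| ≤ |ξ - r| |g ξ + conj (g r)|`, and with it the Harnack inequality
`(A - B) |g ξ| ≤ (A + B) |g r|` for `A = |ξ + r|`, `B = |ξ - r|`, as well as its mirror image.
Since `A² - B² = 4 r Re ξ` and `(A + B)² ≤ 2 (A² + B²) = 4 (r² + |ξ|²)`, this gives
`r Re ξ |g ξ| ≤ (r² + |ξ|²) |g r|` and `r Re ξ |g r| ≤ (r² + |ξ|²) |g ξ|`.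
-/

open Complex Metric Set Filter Topology
open scoped ComplexConjugate

namespace Complex

theorem norm_add_conj_sq_sub_norm_sub_sq (z a : ℂ) :
    ‖z + conj a‖ ^ 2 - ‖z - a‖ ^ 2 = 4 * z.re * a.re := by
  simp only [Complex.sq_norm, normSq_apply, add_re, add_im, sub_re, sub_im, conj_re, conj_im]
  ring

theorem norm_sub_lt_norm_add_conj {z a : ℂ} (hz : 0 < z.re) (ha : 0 < a.re) :
    ‖z - a‖ < ‖z + conj a‖ := by
  have h := norm_add_conj_sq_sub_norm_sub_sq z a
  exact lt_of_pow_lt_pow_left₀ 2 (norm_nonneg _) (by nlinarith [mul_pos hz ha])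

theorem add_conj_ne_zero {z a : ℂ} (hz : 0 < z.re) (ha : 0 < a.re) : z + conj a ≠ 0 :=
  norm_pos_iff.mp ((norm_nonneg _).trans_lt (norm_sub_lt_norm_add_conj hz ha))

/-- Inverse of the Cayley map `z ↦ (z - a) / (z + conj a)` of the right half-plane onto the
unit disc. -/
noncomputable def diskToHalfPlane (a w : ℂ) : ℂ := (a + conj a * w) / (1 - w)

theorem re_diskToHalfPlane (a w : ℂ) :
    (diskToHalfPlane a w).re = a.re * (1 - ‖w‖ ^ 2) / normSq (1 - w) := by
  simp only [diskToHalfPlane, div_re, mul_re, mul_im, add_re, add_im, sub_re, sub_im, one_re,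
    one_im, conj_re, conj_im, Complex.sq_norm, normSq_apply]
  ring

theorem diskToHalfPlane_zero (a : ℂ) : diskToHalfPlane a 0 = a := by
  simp [diskToHalfPlane]

theorem diskToHalfPlane_mapsTo {a : ℂ} (ha : 0 < a.re) :
    MapsTo (diskToHalfPlane a) (ball 0 1) {z | 0 < z.re} := by
  intro w hw
  have hw1 : ‖w‖ < 1 := mem_ball_zero_iff.mp hw
  have hw_ne : 1 - w ≠ 0 := sub_ne_zero.mpr (by rintro rfl; simp at hw1)
  show 0 < (diskToHalfPlane a w).re
  rw [re_diskToHalfPlane]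
  exact div_pos (mul_pos ha (by nlinarith [norm_nonneg w])) (normSq_pos.mpr hw_ne)

theorem differentiableOn_diskToHalfPlane (a : ℂ) :
    DifferentiableOn ℂ (diskToHalfPlane a) (ball 0 1) := by
  refine DifferentiableOn.div (by fun_prop) (by fun_prop) fun w hw => sub_ne_zero.mpr ?_
  rintro rfl
  simp at hw

theorem diskToHalfPlane_sub_div_add_conj {z a : ℂ} (hz : 0 < z.re) (ha : 0 < a.re) :
    diskToHalfPlane a ((z - a) / (z + conj a)) = z := by
  have hza := add_conj_ne_zero hz ha
  have haa : a + conj a ≠ 0 := add_conj_ne_zero ha ha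
  have hden : 1 - (z - a) / (z + conj a) = (a + conj a) / (z + conj a) := by
    field_simp; ring
  rw [diskToHalfPlane, hden]
  field_simp
  ring

variable {g : ℂ → ℂ} {z a : ℂ}

theorem schwarz_pick_rightHalfPlane_of_re_pos (hd : DifferentiableOn ℂ g {z | 0 < z.re})
    (hg : ∀ z, 0 < z.re → 0 < (g z).re) (hz : 0 < z.re) (ha : 0 < a.re) :
    ‖g z - g a‖ * ‖z + conj a‖ ≤ ‖z - a‖ * ‖g z + conj (g a)‖ := by
  have hga := hg a ha
  set F : ℂ → ℂ := fun w =>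
    (g (diskToHalfPlane a w) - g a) / (g (diskToHalfPlane a w) + conj (g a))
  have hmaps := diskToHalfPlane_mapsTo ha
  have hF_diff : DifferentiableOn ℂ F (ball 0 1) := by
    have hgφ := hd.comp (differentiableOn_diskToHalfPlane a) hmaps
    exact (hgφ.sub_const _).div (hgφ.add_const _) fun w hw =>
      add_conj_ne_zero (hg _ (hmaps hw)) hga
  have hF_maps : MapsTo F (ball 0 1) (closedBall 0 1) := fun w hw => by
    rw [mem_closedBall_zero_iff, norm_div, div_le_one (norm_pos_iff.mpr
      (add_conj_ne_zero (hg _ (hmaps hw)) hga))]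
    exact (norm_sub_lt_norm_add_conj (hg _ (hmaps hw)) hga).le
  have hF_zero : F 0 = 0 := by simp [F, diskToHalfPlane_zero]
  have hw : ‖(z - a) / (z + conj a)‖ < 1 := by
    rw [norm_div, div_lt_one (norm_pos_iff.mpr (add_conj_ne_zero hz ha))]
    exact norm_sub_lt_norm_add_conj hz ha
  have key := norm_le_norm_of_mapsTo_ball hF_diff hF_maps hF_zero hw
  simp only [F, diskToHalfPlane_sub_div_add_conj hz ha, norm_div] at key
  rwa [div_le_div_iff₀ (norm_pos_iff.mpr (add_conj_ne_zero (hg z hz) hga))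
    (norm_pos_iff.mpr (add_conj_ne_zero hz ha))] at key

theorem schwarz_pick_rightHalfPlane (hd : DifferentiableOn ℂ g {z | 0 < z.re})
    (hg : ∀ z, 0 < z.re → 0 ≤ (g z).re) (hz : 0 < z.re) (ha : 0 < a.re) :
    ‖g z - g a‖ * ‖z + conj a‖ ≤ ‖z - a‖ * ‖g z + conj (g a)‖ := by
  have h_shift : ∀ ε : ℝ, 0 < ε →
      ‖g z - g a‖ * ‖z + conj a‖ ≤ ‖z - a‖ * ‖g z + conj (g a) + 2 * ε‖ := fun ε hε => by
    have h := schwarz_pick_rightHalfPlane_of_re_pos (g := fun z => g z + ε)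
      (hd.add_const _) (fun z hz => by simpa using (hg z hz).trans_lt (lt_add_of_pos_right _ hε))
      hz ha
    simp only [add_sub_add_right_eq_sub, map_add, conj_ofReal] at h
    convert h using 3
    ring
  have h_lim : Tendsto (fun ε : ℝ => ‖z - a‖ * ‖g z + conj (g a) + 2 * ε‖) (𝓝[>] 0)
      (𝓝 (‖z - a‖ * ‖g z + conj (g a)‖)) :=
    tendsto_nhdsWithin_of_tendsto_nhds (Continuous.tendsto' (by fun_prop) _ _ (by simp))
  exact ge_of_tendsto h_lim (eventually_nhdsWithin_of_forall h_shift)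

theorem harnack_rightHalfPlane (hd : DifferentiableOn ℂ g {z | 0 < z.re})
    (hg : ∀ z, 0 < z.re → 0 ≤ (g z).re) (hz : 0 < z.re) (ha : 0 < a.re) :
    (‖z + conj a‖ - ‖z - a‖) * ‖g z‖ ≤ (‖z + conj a‖ + ‖z - a‖) * ‖g a‖ := by
  have h_sp := schwarz_pick_rightHalfPlane hd hg hz ha
  have h_sub : ‖g z‖ - ‖g a‖ ≤ ‖g z - g a‖ := norm_sub_norm_le _ _
  have h_add : ‖g z + conj (g a)‖ ≤ ‖g z‖ + ‖g a‖ := (norm_add_le _ _).trans_eq (by rw [norm_conj])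
  nlinarith [norm_nonneg (z + conj a), norm_nonneg (z - a)]

theorem harnack_rightHalfPlane_ofReal (hd : DifferentiableOn ℂ g {z | 0 < z.re})
    (hg : ∀ z, 0 < z.re → 0 ≤ (g z).re) {r : ℝ} (hr : 0 < r) (hz : 0 < z.re) :
    r * z.re * ‖g z‖ ≤ (r ^ 2 + ‖z‖ ^ 2) * ‖g r‖ ∧
      r * z.re * ‖g r‖ ≤ (r ^ 2 + ‖z‖ ^ 2) * ‖g z‖ := by
  have hr' : 0 < (r : ℂ).re := by simpa using hr
  set A := ‖z + r‖
  set B := ‖z - r‖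
  have h_diff : A ^ 2 - B ^ 2 = 4 * r * z.re := by
    have := norm_add_conj_sq_sub_norm_sub_sq z r
    rwa [conj_ofReal, ofReal_re, mul_right_comm] at this
  have h_sum : (A + B) ^ 2 ≤ 4 * (r ^ 2 + ‖z‖ ^ 2) := by
    have := parallelogram_law_with_norm ℝ z (r : ℂ)
    rw [norm_real, Real.norm_of_nonneg hr.le] at this
    nlinarith [sq_nonneg (A - B)]
  have h_scale : ∀ u v : ℝ, 0 ≤ v → (A - B) * u ≤ (A + B) * v →
      r * z.re * u ≤ (r ^ 2 + ‖z‖ ^ 2) * v := fun u v hv h => by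
    have hAB : 0 ≤ A + B := add_nonneg (norm_nonneg _) (norm_nonneg _)
    have := calc 4 * r * z.re * u = (A + B) * ((A - B) * u) := by rw [← h_diff]; ring
      _ ≤ (A + B) * ((A + B) * v) := mul_le_mul_of_nonneg_left h hAB
      _ = (A + B) ^ 2 * v := by ring
      _ ≤ 4 * (r ^ 2 + ‖z‖ ^ 2) * v := mul_le_mul_of_nonneg_right h_sum hv
    linarith
  have h_za := harnack_rightHalfPlane hd hg hz hr'
  have h_az := harnack_rightHalfPlane hd hg hr' hz
  rw [conj_ofReal] at h_za
  rw [← norm_conj (↑r + conj z), map_add, conj_ofReal, conj_conj, add_comm, norm_sub_rev] at h_az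
  exact ⟨h_scale _ _ (norm_nonneg _) h_za, h_scale _ _ (norm_nonneg _) h_az⟩

end Complex

namespace IsRogers

variable {f : ℂ → ℂ}

theorem differentiableOn_div_self (hf : IsRogers f) :
    DifferentiableOn ℂ (fun z => f z / z) {z | 0 < z.re} :=
  hf.1.div differentiableOn_id fun z hz h => by simp_all

theorem norm_le (hf : IsRogers f) {r : ℝ} (hr : 0 < r) {ξ : ℂ} (hξ : 0 < ξ.re) :
    ‖f ξ‖ ≤ (r ^ 2 + ‖ξ‖ ^ 2) / r ^ 2 * (‖ξ‖ / ξ.re) * ‖f r‖ := by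
  have h := (harnack_rightHalfPlane_ofReal hf.differentiableOn_div_self hf.2 hr hξ).1
  have hξ0 : 0 < ‖ξ‖ := hξ.trans_le (re_le_norm ξ)
  rw [norm_div, norm_div, norm_real, Real.norm_of_nonneg hr.le] at h
  field_simp at h ⊢
  linarith

theorem le_norm (hf : IsRogers f) {r : ℝ} (hr : 0 < r) {ξ : ℂ} (hξ : 0 < ξ.re) :
    ‖ξ‖ ^ 2 / (r ^ 2 + ‖ξ‖ ^ 2) * (ξ.re / ‖ξ‖) * ‖f r‖ ≤ ‖f ξ‖ := by
  have h := (harnack_rightHalfPlane_ofReal hf.differentiableOn_div_self hf.2 hr hξ).2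
  have hξ0 : 0 < ‖ξ‖ := hξ.trans_le (re_le_norm ξ)
  rw [norm_div, norm_div, norm_real, Real.norm_of_nonneg hr.le] at h
  field_simp at h ⊢
  linarith

end IsRogers

/-- Two-sided bound comparing `|f(ξ)|` with `|f(r)|` for a Rogers function `f`. -/
theorem stmt_8 (f : ℂ → ℂ) (hf : IsRogers f) (r : ℝ) (hr : 0 < r)
    (ξ : ℂ) (hξ : 0 < ξ.re) :
    (1 / Real.sqrt 2) * ((‖ξ‖) ^ 2 / (r ^ 2 + (‖ξ‖) ^ 2)) *
        (ξ.re / ‖ξ‖) * ‖f r‖ ≤ ‖f ξ‖ ∧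
    ‖f ξ‖ ≤ Real.sqrt 2 * ((r ^ 2 + (‖ξ‖) ^ 2) / r ^ 2) *
        (‖ξ‖ / ξ.re) * ‖f r‖ := by
  have h_sqrt : 1 ≤ Real.sqrt 2 := Real.one_le_sqrt.mpr one_le_two
  have h_lower := hf.le_norm hr hξ
  have h_upper := hf.norm_le hr hξ
  constructor
  · refine le_trans ?_ h_lower
    rw [mul_assoc, mul_assoc, mul_assoc]
    exact mul_le_of_le_one_left (by positivity) (div_le_one_of_le₀ h_sqrt (by positivity))
  · refine h_upper.trans ?_
    rw [mul_assoc, mul_assoc, mul_assoc]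
    exact le_mul_of_one_le_left (by positivity) h_sqrt
end

section
/- Suppose f is a non-constant Rogers function, 0 < ϱ ≤ ∞, ε > 0, and φ(s) ≥ ε for all s ∈ (−ϱ, 0), where φ is the function in the exponential representation of f. Then there exists a constant C(ε) > 0 such that |f(ξ)|/|f(η)| ≥ C(ε)·(ξ/η)^{ε/π} whenever 0 < η ≤ ξ < ϱ. -/
open MeasureTheory
open scoped ENNReal

/-! On the positive half-line the representation gives
`log ‖f x‖ = log c + π⁻¹ ∫ (x²/(x²+s²) − 1/(1+|s|)) φ(s)/|s| ds`, so for `η ≤ ξ`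
`log (‖f ξ‖/‖f η‖) = π⁻¹ ∫ (ξ²/(ξ²+s²) − η²/(η²+s²)) φ(s)/|s| ds` with a nonnegative integrand.
Keeping only `s ∈ (−ξ, 0)`, where `φ ≥ ε` and the integrand is at least `ε` times an explicit
rational function of `s`, and integrating that function in closed form bounds the right-hand side
below by `ε (log (ξ/η) − ½ log 2) / π`. Hence `C(ε) = 2^(−ε/(2π))` works. -/

section
open Real Set

theorem re_div_add_I_mul_sub_one_div (x s : ℝ) :
    ((x : ℂ) / (x + Complex.I * s) - 1 / (1 + ((|s| : ℝ) : ℂ))).re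
      = x ^ 2 / (x ^ 2 + s ^ 2) - 1 / (1 + |s|) := by
  have h : (1 : ℂ) / (1 + ((|s| : ℝ) : ℂ)) = ((1 / (1 + |s|) : ℝ) : ℂ) := by push_cast; rfl
  rw [Complex.sub_re, h, Complex.ofReal_re, Complex.div_re, Complex.normSq_apply]
  simp only [Complex.ofReal_re, Complex.add_re, Complex.mul_re, Complex.I_re, Complex.I_im,
    Complex.ofReal_im, Complex.add_im, Complex.mul_im]
  ring

theorem norm_ofReal_mul_exp_integral {α : Type*} [MeasurableSpace α] {μ : Measure α}
    {c : ℝ} (hc : 0 ≤ c) (a : ℝ) {F : α → ℂ} (hF : Integrable F μ) :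
    ‖(c : ℂ) * Complex.exp ((1 / (a : ℂ)) * ∫ x, F x ∂μ)‖
      = c * Real.exp ((1 / a) * ∫ x, (F x).re ∂μ) := by
  have h := integral_re hF
  simp only [RCLike.re_to_complex] at h
  rw [norm_mul, Complex.norm_exp, Complex.norm_real, Real.norm_of_nonneg hc, h,
    show (1 / (a : ℂ)) = ((1 / a : ℝ) : ℂ) by push_cast; rfl, Complex.re_ofReal_mul]

theorem integral_neg_mul_div_mul_add_sq {ξ η : ℝ} (hξ : 0 < ξ) (hη : 0 < η) :
    ∫ s in -ξ..0, -s * (ξ ^ 2 - η ^ 2) / ((ξ ^ 2 + s ^ 2) * (η ^ 2 + s ^ 2))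
      = (log (ξ ^ 2 + η ^ 2) - log 2 - log (η ^ 2)) / 2 := by
  have hderiv : ∀ s ∈ uIcc (-ξ) 0,
      HasDerivAt (fun s => (log (ξ ^ 2 + s ^ 2) - log (η ^ 2 + s ^ 2)) / 2)
      (-s * (ξ ^ 2 - η ^ 2) / ((ξ ^ 2 + s ^ 2) * (η ^ 2 + s ^ 2))) s := by
    intro s _
    have hξs : HasDerivAt (fun s : ℝ => ξ ^ 2 + s ^ 2) (2 * s) s := by
      simpa using (hasDerivAt_pow 2 s).const_add (ξ ^ 2)
    have hηs : HasDerivAt (fun s : ℝ => η ^ 2 + s ^ 2) (2 * s) s := by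
      simpa using (hasDerivAt_pow 2 s).const_add (η ^ 2)
    refine (((hξs.log (by positivity)).sub (hηs.log (by positivity))).div_const 2).congr_deriv ?_
    field_simp
    ring
  have hcont :
      Continuous fun s : ℝ => -s * (ξ ^ 2 - η ^ 2) / ((ξ ^ 2 + s ^ 2) * (η ^ 2 + s ^ 2)) :=
    Continuous.div (by fun_prop) (by fun_prop) fun s => by positivity
  rw [intervalIntegral.integral_eq_sub_of_hasDerivAt hderiv (hcont.intervalIntegrable _ _)]
  rw [show ξ ^ 2 + (-ξ) ^ 2 = 2 * ξ ^ 2 by ring, log_mul two_ne_zero (by positivity)]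
  rw [neg_sq, zero_pow two_ne_zero, add_zero, add_zero, add_comm (η ^ 2)]
  ring

theorem sq_div_sq_add_sq_sub (ξ η s : ℝ) (hξ : ξ ≠ 0) (hη : η ≠ 0) :
    ξ ^ 2 / (ξ ^ 2 + s ^ 2) - η ^ 2 / (η ^ 2 + s ^ 2)
      = s ^ 2 * (ξ ^ 2 - η ^ 2) / ((ξ ^ 2 + s ^ 2) * (η ^ 2 + s ^ 2)) := by
  have : ξ ^ 2 + s ^ 2 ≠ 0 := by positivity
  have : η ^ 2 + s ^ 2 ≠ 0 := by positivity
  field_simp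
  ring

theorem mul_log_sub_le_integral {ε ξ η : ℝ} {φ : ℝ → ℝ} (hε : 0 ≤ ε) (hη : 0 < η)
    (hle : η ≤ ξ) (hφ : ∀ s, 0 ≤ φ s) (hφε : ∀ s ∈ Ioo (-ξ) 0, ε ≤ φ s)
    (hint : Integrable fun s =>
      (ξ ^ 2 / (ξ ^ 2 + s ^ 2) - η ^ 2 / (η ^ 2 + s ^ 2)) * (φ s / |s|)) :
    ε * (log ξ - log η - log 2 / 2)
      ≤ ∫ s, (ξ ^ 2 / (ξ ^ 2 + s ^ 2) - η ^ 2 / (η ^ 2 + s ^ 2)) * (φ s / |s|) := by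
  have hξ : 0 < ξ := hη.trans_le hle
  set m : ℝ → ℝ := fun s => -s * (ξ ^ 2 - η ^ 2) / ((ξ ^ 2 + s ^ 2) * (η ^ 2 + s ^ 2))
    with hm_def
  have hsq : 0 ≤ ξ ^ 2 - η ^ 2 := sub_nonneg.2 (pow_le_pow_left₀ hη.le hle 2)
  have hgap (s : ℝ) : 0 ≤ ξ ^ 2 / (ξ ^ 2 + s ^ 2) - η ^ 2 / (η ^ 2 + s ^ 2) := by
    rw [sq_div_sq_add_sq_sub ξ η s hξ.ne' hη.ne']
    positivity
  have hlog : log ξ - log η - log 2 / 2 ≤ ∫ s in -ξ..0, m s := by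
    have : log (ξ ^ 2) ≤ log (ξ ^ 2 + η ^ 2) :=
      log_le_log (by positivity) (le_add_of_nonneg_right (by positivity))
    rw [integral_neg_mul_div_mul_add_sq hξ hη, log_pow]
    rw [log_pow] at this
    push_cast at *
    linarith
  have hm_le : ∀ s ∈ Ioo (-ξ) 0,
      ε * m s ≤ (ξ ^ 2 / (ξ ^ 2 + s ^ 2) - η ^ 2 / (η ^ 2 + s ^ 2)) * (φ s / |s|) := by
    intro s hs
    have hs0 : s < 0 := hs.2
    have hm : 0 ≤ m s := by
      have : 0 ≤ -s := by linarith
      positivity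
    calc ε * m s ≤ φ s * m s := mul_le_mul_of_nonneg_right (hφε s hs) hm
      _ = _ := by
        rw [sq_div_sq_add_sq_sub ξ η s hξ.ne' hη.ne', abs_of_neg hs0, hm_def]
        field_simp
  have hm_cont : Continuous m := Continuous.div (by fun_prop) (by fun_prop) fun s => by positivity
  calc ε * (log ξ - log η - log 2 / 2) ≤ ε * ∫ s in -ξ..0, m s := by gcongr
    _ = ∫ s in Ioo (-ξ) 0, ε * m s := by
      rw [intervalIntegral.integral_of_le (by linarith), integral_Ioc_eq_integral_Ioo,
        integral_const_mul]
    _ ≤ ∫ s in Ioo (-ξ) 0,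
          (ξ ^ 2 / (ξ ^ 2 + s ^ 2) - η ^ 2 / (η ^ 2 + s ^ 2)) * (φ s / |s|) :=
      setIntegral_mono_on ((hm_cont.integrableOn_Icc.mono_set Ioo_subset_Icc_self).const_mul ε)
        hint.integrableOn measurableSet_Ioo hm_le
    _ ≤ ∫ s, (ξ ^ 2 / (ξ ^ 2 + s ^ 2) - η ^ 2 / (η ^ 2 + s ^ 2)) * (φ s / |s|) :=
      setIntegral_le_integral hint
        (.of_forall fun s => mul_nonneg (hgap s) (div_nonneg (hφ s) (abs_nonneg s)))

noncomputable def rogersIntegrand (φ : ℝ → ℝ) (ξ : ℂ) (s : ℝ) : ℂ :=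
  (ξ / (ξ + Complex.I * (s : ℂ)) - 1 / (1 + ((|s| : ℝ) : ℂ))) * ((φ s / |s| : ℝ) : ℂ)

theorem re_rogersIntegrand_ofReal (φ : ℝ → ℝ) (x s : ℝ) :
    (rogersIntegrand φ x s).re = (x ^ 2 / (x ^ 2 + s ^ 2) - 1 / (1 + |s|)) * (φ s / |s|) := by
  rw [rogersIntegrand, Complex.re_mul_ofReal, re_div_add_I_mul_sub_one_div]

end

/-- If a non-constant Rogers function `f` has exponential representation with
density `φ` satisfying `φ(s) ≥ ε` for `s ∈ (−ϱ, 0)`, then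
`|f(ξ)|/|f(η)| ≥ C(ε)·(ξ/η)^{ε/π}` for `0 < η ≤ ξ < ϱ`, where `C(ε) > 0`
depends only on `ε`. -/
theorem stmt_13 (ε : ℝ) (hε : 0 < ε) :
    ∃ C : ℝ, 0 < C ∧
      ∀ (f : ℂ → ℂ) (c : ℝ) (φ : ℝ → ℝ) (ϱ : ℝ≥0∞),
        0 < c → Measurable φ → (∀ s : ℝ, φ s ∈ Set.Icc 0 Real.pi) →
        (∀ ξ : ℂ, 0 < ξ.re →
          Integrable (fun s : ℝ =>
            (ξ / (ξ + Complex.I * (s : ℂ)) - 1 / (1 + ((|s| : ℝ) : ℂ))) * ((φ s / |s| : ℝ) : ℂ))) →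
        (∀ ξ : ℂ, 0 < ξ.re →
          f ξ = (c : ℂ) * Complex.exp ((1 / (Real.pi : ℂ)) *
            ∫ s : ℝ,
              (ξ / (ξ + Complex.I * (s : ℂ)) - 1 / (1 + ((|s| : ℝ) : ℂ))) * ((φ s / |s| : ℝ) : ℂ))) →
        (∃ ξ₁ ξ₂ : ℂ, 0 < ξ₁.re ∧ 0 < ξ₂.re ∧ f ξ₁ ≠ f ξ₂) →
        0 < ϱ →
        (∀ s : ℝ, s < 0 → ENNReal.ofReal (-s) < ϱ → ε ≤ φ s) →
        ∀ ξ η : ℝ, 0 < η → η ≤ ξ → ENNReal.ofReal ξ < ϱ →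
          C * (ξ / η) ^ (ε / Real.pi) ≤ ‖f ξ‖ / ‖f η‖ := by
  refine ⟨Real.exp (-(ε / Real.pi) * (Real.log 2 / 2)), Real.exp_pos _, ?_⟩
  intro f c φ ϱ hc _ hφ hInt hrep _ _ hφε ξ η hη hle hξϱ
  have hξ : 0 < ξ := hη.trans_le hle
  have hInt_re (x : ℝ) (hx : 0 < x) : Integrable fun s => (rogersIntegrand φ x s).re :=
    (hInt x (by simpa)).re
  have hnorm (x : ℝ) (hx : 0 < x) :
      ‖f x‖ = c * Real.exp ((1 / Real.pi) * ∫ s, (rogersIntegrand φ x s).re) := by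
    rw [hrep x (by simpa)]
    exact norm_ofReal_mul_exp_integral hc.le _ (hInt x (by simpa))
  have hdiff : (fun s => (rogersIntegrand φ ξ s).re - (rogersIntegrand φ η s).re)
      = fun s => (ξ ^ 2 / (ξ ^ 2 + s ^ 2) - η ^ 2 / (η ^ 2 + s ^ 2)) * (φ s / |s|) := by
    ext s
    rw [re_rogersIntegrand_ofReal, re_rogersIntegrand_ofReal]
    ring
  have hφε' : ∀ s ∈ Set.Ioo (-ξ) 0, ε ≤ φ s := fun s hs =>
    hφε s hs.2 ((ENNReal.ofReal_le_ofReal (by linarith [hs.1])).trans_lt hξϱ)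
  have hbound := mul_log_sub_le_integral hε.le hη hle (fun s => (hφ s).1) hφε'
    (hdiff ▸ (hInt_re ξ hξ).sub (hInt_re η hη))
  rw [hnorm ξ hξ, hnorm η hη, mul_div_mul_left _ _ hc.ne', ← Real.exp_sub,
    Real.rpow_def_of_pos (div_pos hξ hη), ← Real.exp_add, Real.exp_le_exp, ← mul_sub,
    ← integral_sub (hInt_re ξ hξ) (hInt_re η hη), hdiff, Real.log_div hξ.ne' hη.ne']
  calc -(ε / Real.pi) * (Real.log 2 / 2) + (Real.log ξ - Real.log η) * (ε / Real.pi)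
      = 1 / Real.pi * (ε * (Real.log ξ - Real.log η - Real.log 2 / 2)) := by ring
    _ ≤ _ := by gcongr
end

section
/- Fix ϑ ∈ (0, π/2). There exists a constant C(ϑ) > 0 with the following property: if ζ ∈ ℂ satisfies Re ζ ≥ 0, |Arg ζ| ≤ π/2 (interpreting ζ on the imaginary axis appropriately) and additionally either |ζ| ∉ (ϱ₁, ϱ₂) or Arg ζ ≤ ϑ, and if 2ϱ₁ < s < ϱ₂/2, then 1/|ζ − is| ≤ C(ϑ)/|ζ + is|. In particular one may take C(ϑ) = max{3, 1/sin((π/2 − ϑ)/2)}. -/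
open scoped ENNReal

open Real InnerProductGeometry

/-! In case (i) the moduli of `ζ` and `is` differ by a factor of at least two, so `|ζ + is|` and
`|ζ − is|` are both comparable to `|ζ| + s`. In case (ii) the angle between `ζ` and `is` is at
least `π/2 − ϑ`, and the law of cosines gives `|ξ − η| ≥ (|ξ| + |η|) sin(∠(ξ, η)/2)`, while
`|ζ + is| ≤ |ζ| + s` always. -/

theorem norm_add_le_three_mul_norm_sub {E : Type*} [SeminormedAddCommGroup E] {u v : E}
    (h : 2 * ‖u‖ ≤ ‖v‖ ∨ 2 * ‖v‖ ≤ ‖u‖) : ‖u + v‖ ≤ 3 * ‖u - v‖ := by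
  calc ‖u + v‖ ≤ ‖u‖ + ‖v‖ := norm_add_le u v
    _ ≤ 3 * |‖u‖ - ‖v‖| := by
      rcases h with h | h <;> rcases abs_cases (‖u‖ - ‖v‖) with ⟨habs, _⟩ | ⟨habs, _⟩ <;>
        linarith [norm_nonneg u, norm_nonneg v]
    _ ≤ 3 * ‖u - v‖ := by gcongr; exact abs_norm_sub_norm_le u v

theorem InnerProductGeometry.norm_add_norm_mul_sin_half_angle_le_norm_sub {V : Type*}
    [NormedAddCommGroup V] [InnerProductSpace ℝ V] (x y : V) :
    (‖x‖ + ‖y‖) * sin (angle x y / 2) ≤ ‖x - y‖ := by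
  have hsin_sq : sin (angle x y / 2) ^ 2 = (1 - cos (angle x y)) / 2 := by
    have := cos_sq (angle x y / 2)
    rw [mul_div_cancel₀ _ two_ne_zero] at this
    linarith [sin_sq_add_cos_sq (angle x y / 2)]
  have hsin : 0 ≤ sin (angle x y / 2) :=
    sin_nonneg_of_nonneg_of_le_pi (by linarith [angle_nonneg x y])
      (by linarith [angle_le_pi x y, pi_pos])
  -- `‖x - y‖² - (‖x‖ + ‖y‖)² sin²(θ/2) = (‖x‖ - ‖y‖)² (1 + cos θ) / 2`
  refine (pow_le_pow_iff_left₀ (by positivity) (norm_nonneg _) two_ne_zero).1 ?_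
  rw [mul_pow, hsin_sq, sq ‖x - y‖,
    norm_sub_sq_eq_norm_sq_add_norm_sq_sub_two_mul_norm_mul_norm_mul_cos_angle]
  nlinarith [mul_nonneg (sq_nonneg (‖x‖ - ‖y‖)) (by linarith [neg_one_le_cos (angle x y)] :
    0 ≤ 1 + cos (angle x y))]

namespace Complex

variable {ζ : ℂ} {ϑ : ℝ}

theorem im_le_norm_mul_sin_of_arg_le (hre : 0 ≤ ζ.re) (harg : arg ζ ≤ ϑ) (hϑ : ϑ ≤ π / 2) :
    ζ.im ≤ ‖ζ‖ * Real.sin ϑ := by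
  have harg_ge : -(π / 2) ≤ arg ζ := neg_pi_div_two_le_arg_iff.2 (.inl hre)
  rw [← norm_mul_sin_arg ζ]
  exact mul_le_mul_of_nonneg_left (sin_le_sin_of_le_of_le_pi_div_two harg_ge hϑ harg)
    (norm_nonneg ζ)

theorem pi_div_two_sub_le_angle_I_mul {s : ℝ} (hs : 0 < s) (hre : 0 ≤ ζ.re) (harg : arg ζ ≤ ϑ)
    (hϑ : ϑ ≤ π / 2) : π / 2 - ϑ ≤ angle ζ (I * s) := by
  rcases eq_or_ne ζ 0 with rfl | hζ
  · rw [angle_zero_left]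
    simpa using harg
  have harg_ge : -(π / 2) ≤ arg ζ := neg_pi_div_two_le_arg_iff.2 (.inl hre)
  have hcos : Real.cos (angle ζ (I * s)) ≤ Real.cos (π / 2 - ϑ) := by
    have hnorm : ‖ζ‖ * ‖I * (s : ℂ)‖ = ‖ζ‖ * s := by simp [abs_of_pos hs]
    rw [cos_angle, Real.cos_pi_div_two_sub, hnorm, div_le_iff₀ (by positivity), Complex.inner]
    have := im_le_norm_mul_sin_of_arg_le hre harg hϑ
    simp only [mul_re, mul_im, I_re, I_im, ofReal_re, ofReal_im, conj_re, conj_im]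
    nlinarith
  exact (strictAntiOn_cos.le_iff_ge ⟨angle_nonneg _ _, angle_le_pi _ _⟩
    ⟨by linarith, by linarith [pi_pos]⟩).1 hcos

theorem norm_add_I_mul_mul_sin_le_norm_sub_I_mul {s : ℝ} (hs : 0 < s) (hre : 0 ≤ ζ.re)
    (harg : arg ζ ≤ ϑ) (hϑ : ϑ ≤ π / 2) :
    ‖ζ + I * s‖ * Real.sin ((π / 2 - ϑ) / 2) ≤ ‖ζ - I * s‖ := by
  have hangle := pi_div_two_sub_le_angle_I_mul hs hre harg hϑ
  have hsin : Real.sin ((π / 2 - ϑ) / 2) ≤ Real.sin (angle ζ (I * s) / 2) :=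
    sin_le_sin_of_le_of_le_pi_div_two (by linarith [pi_pos])
      (by linarith [angle_le_pi ζ (I * s)]) (by linarith)
  calc ‖ζ + I * s‖ * Real.sin ((π / 2 - ϑ) / 2)
      ≤ (‖ζ‖ + ‖I * (s : ℂ)‖) * Real.sin (angle ζ (I * s) / 2) :=
        mul_le_mul_of_nonneg (norm_add_le _ _) hsin (norm_nonneg _)
          (sin_nonneg_of_nonneg_of_le_pi (by linarith) (by linarith [angle_le_pi ζ (I * s)]))
    _ ≤ ‖ζ - I * s‖ := norm_add_norm_mul_sin_half_angle_le_norm_sub _ _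

end Complex

/-- Geometric comparison of `|ζ + is|` and `|ζ − is|`: with
`C = max{3, 1/sin((π/2 − ϑ)/2)}`, if `Re ζ ≥ 0`, and either `|ζ| ∉ (ϱ₁, ϱ₂)` or
`Arg ζ ≤ ϑ`, then for `2ϱ₁ < s < ϱ₂/2` one has `1/|ζ − is| ≤ C/|ζ + is|`
(stated in the robust multiplicative form `|ζ + is| ≤ C·|ζ − is|`). -/
theorem stmt_15 (ϑ : ℝ) (hϑ : ϑ ∈ Set.Ioo 0 (Real.pi / 2)) :
    ∃ C : ℝ, C = max 3 (Real.sin ((Real.pi / 2 - ϑ) / 2))⁻¹ ∧ 0 < C ∧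
      ∀ (ϱ₁ : ℝ) (ϱ₂ : ℝ≥0∞) (ζ : ℂ) (s : ℝ),
        0 ≤ ϱ₁ → ENNReal.ofReal ϱ₁ ≤ ϱ₂ →
        0 ≤ ζ.re →
        (¬(ϱ₁ < ‖ζ‖ ∧ ENNReal.ofReal (‖ζ‖) < ϱ₂) ∨
          Complex.arg ζ ≤ ϑ) →
        2 * ϱ₁ < s → ENNReal.ofReal (2 * s) < ϱ₂ →
        ‖ζ + Complex.I * (s : ℂ)‖ ≤ C * ‖ζ - Complex.I * (s : ℂ)‖ := by
  obtain ⟨hϑ0, hϑπ⟩ := hϑ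
  refine ⟨_, rfl, lt_max_of_lt_left three_pos, ?_⟩
  intro ϱ₁ ϱ₂ ζ s _ _ hre hcase hs₁ hs₂
  have hs : 0 < s := by linarith
  have hIs : ‖Complex.I * (s : ℂ)‖ = s := by simp [abs_of_pos hs]
  rcases hcase with hmod | harg
  · have hsep : 2 * ‖ζ‖ ≤ ‖Complex.I * (s : ℂ)‖ ∨ 2 * ‖Complex.I * (s : ℂ)‖ ≤ ‖ζ‖ := by
      rw [hIs]
      by_cases hζ : ϱ₁ < ‖ζ‖
      · right
        have := hs₂.trans_le (not_and.1 hmod hζ |> not_lt.1)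
        exact ((ENNReal.ofReal_lt_ofReal_iff_of_nonneg (by positivity)).1 this).le
      · left
        linarith [not_lt.1 hζ]
    exact (norm_add_le_three_mul_norm_sub hsep).trans
      (mul_le_mul_of_nonneg_right (le_max_left _ _) (norm_nonneg _))
  · have hsin : 0 < Real.sin ((Real.pi / 2 - ϑ) / 2) :=
      Real.sin_pos_of_pos_of_lt_pi (by linarith) (by linarith)
    calc ‖ζ + Complex.I * (s : ℂ)‖
        ≤ (Real.sin ((Real.pi / 2 - ϑ) / 2))⁻¹ * ‖ζ - Complex.I * (s : ℂ)‖ := by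
          rw [inv_mul_eq_div, le_div_iff₀ hsin]
          exact Complex.norm_add_I_mul_mul_sin_le_norm_sub_I_mul hs hre harg hϑπ.le
      _ ≤ _ := mul_le_mul_of_nonneg_right (le_max_right _ _) (norm_nonneg _)
end
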